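/- arXiv:2007.01808 — 2 statements merged into one kernel-verified Lean document; each statement's English description precedes it below -/
import Mathlib

section
/- Let k ≥ 2 and let m be an even positive integer. Then m ∈ D(k) if and only if there exist residues a_i ∈ {1, …, p_i − 1} for i = 2, …, k (odd primes only) such that {a_i mod p_i}_{i=2}^k is a restricted covering of ⟨1⟩_{m/2 − 1} = (1, 2, …, m/2 − 1). -/
/-!
If `x` and `x + m` are consecutive integers coprime to `p_k#`, then `x` is odd, so every `x + j`
with `j` odd is divisible by `2` and only the terms `x + 2 t` matter. For an odd prime `q`,
`q ∣ x + 2 t` exactly when `t ≡ -x / 2 (mod q)`. So with `a_q := -x / 2 mod q`, the number `x + 2 t`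
shares a factor with `p_k#` iff `t` lies in one of the classes `a_q`, and the gap conditions
on `x` say that these classes restrictedly cover `⟨1⟩_{m/2 - 1}`. Conversely, the Chinese remainder
theorem turns residues `a_q` into an odd `x` with `x ≡ -2 a_q (mod q)`.
-/

namespace PrimorialDifferences

/-- The k-th primorial: product of the first k primes (p_1 = 2 is `Nat.nth Nat.Prime 0`). -/
noncomputable def primorial (k : ℕ) : ℕ := ∏ i ∈ Finset.range k, Nat.nth Nat.Prime i

/-- `memD k m` : `m` is a difference between consecutive positive integers coprime to `primorial k`. -/
def memD (k m : ℕ) : Prop :=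
  ∃ x : ℕ, 0 < x ∧ Nat.gcd x (primorial k) = 1 ∧ Nat.gcd (x + m) (primorial k) = 1 ∧
    ∀ j : ℕ, 0 < j → j < m → 1 < Nat.gcd (x + j) (primorial k)


/-- `Covers π r a m` : the residue classes `r i mod π i`, `i = 1, …, k`, cover the sequence
`⟨a⟩_m = (a, a+1, …, a+m−1)` of `m` consecutive integers starting at `a`. -/
def Covers {k : ℕ} (π : Fin k → ℕ) (r : Fin k → ℕ) (a : ℤ) (m : ℕ) : Prop :=
  ∀ j : ℕ, j < m → ∃ i : Fin k, a + (j : ℤ) ≡ (r i : ℤ) [ZMOD (π i : ℤ)]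

/-- `RestrictedCovers π r a m` : the residue classes `r i mod π i` cover `⟨a⟩_m` and,
in addition, none of them covers `a - 1` or `a + m`. -/
def RestrictedCovers {k : ℕ} (π : Fin k → ℕ) (r : Fin k → ℕ) (a : ℤ) (m : ℕ) : Prop :=
  Covers π r a m ∧
    (∀ i : Fin k, ¬ (a - 1 ≡ (r i : ℤ) [ZMOD (π i : ℤ)])) ∧
    (∀ i : Fin k, ¬ (a + (m : ℤ) ≡ (r i : ℤ) [ZMOD (π i : ℤ)]))


lemma odd_nth_prime_succ (i : ℕ) : Odd (Nat.nth Nat.Prime (i + 1)) := by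
  refine (Nat.prime_nth_prime _).odd_of_ne_two (ne_of_gt ?_)
  rw [← Nat.nth_prime_zero_eq_two]
  exact Nat.nth_strictMono Nat.infinite_setOfPred_prime i.succ_pos

lemma primorial_pos (k : ℕ) : 0 < primorial k :=
  Finset.prod_pos fun i _ => (Nat.prime_nth_prime i).pos

lemma gcd_primorial_eq_one_iff {k y : ℕ} :
    Nat.gcd y (primorial k) = 1 ↔ ∀ i < k, ¬ Nat.nth Nat.Prime i ∣ y := by
  change Nat.Coprime y (primorial k) ↔ _
  simp only [primorial, Nat.coprime_prod_right_iff, Finset.mem_range]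
  refine forall₂_congr fun i _ => ?_
  rw [Nat.coprime_comm, (Nat.prime_nth_prime i).coprime_iff_not_dvd]

lemma one_lt_gcd_primorial_iff {k y : ℕ} :
    1 < Nat.gcd y (primorial k) ↔ ∃ i < k, Nat.nth Nat.Prime i ∣ y := by
  have hpos : 0 < Nat.gcd y (primorial k) := Nat.gcd_pos_of_pos_right _ (primorial_pos k)
  rw [← not_iff_not]
  simp only [not_exists, not_and, ← gcd_primorial_eq_one_iff]
  omega

lemma dvd_add_two_mul_iff_modEq {q x w t : ℤ} (hq : Odd q) (hw : q ∣ x + 2 * w) :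
    q ∣ x + 2 * t ↔ t ≡ w [ZMOD q] := by
  rw [Int.modEq_iff_dvd, ← dvd_sub_right hw, show x + 2 * w - (x + 2 * t) = 2 * (w - t) by ring]
  exact ⟨(Int.isCoprime_two_right.mpr hq).dvd_of_dvd_mul_left, (Dvd.dvd.mul_left · 2)⟩

-- `w ≡ -x / 2 (mod q)`, since `2 (q / 2) = q - 1`.
lemma exists_lt_dvd_add_two_mul {q : ℕ} (hq : Odd q) (x : ℕ) : ∃ w < q, q ∣ x + 2 * w := by
  refine ⟨x * (q / 2) % q, Nat.mod_lt _ hq.pos, (Nat.modEq_zero_iff_dvd).mp ?_⟩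
  calc x + 2 * (x * (q / 2) % q) ≡ x + 2 * (x * (q / 2)) [MOD q] :=
        ((Nat.mod_modEq _ _).mul_left 2).add_left x
    _ = x * (2 * (q / 2) + 1) := by ring
    _ = x * q := by rw [Nat.two_mul_div_two_add_one_of_odd hq]
    _ ≡ 0 [MOD q] := (Nat.modEq_zero_iff_dvd).mpr (dvd_mul_left q x)

lemma exists_modEq_nth_prime {n : ℕ} (c : Fin n → ℕ) :
    ∃ x, ∀ i : Fin n, x ≡ c i [MOD Nat.nth Nat.Prime (i : ℕ)] := by
  have hinj : Function.Injective fun i : Fin n => Nat.nth Nat.Prime i :=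
    (Nat.nth_injective Nat.infinite_setOfPred_prime).comp Fin.val_injective
  obtain ⟨x, hx⟩ := Nat.chineseRemainderOfFinset c (fun i => Nat.nth Nat.Prime (i : ℕ)) Finset.univ
    (fun i _ => (Nat.prime_nth_prime i).ne_zero)
    (fun i _ j _ hij => (Nat.coprime_primes (Nat.prime_nth_prime i) (Nat.prime_nth_prime j)).mpr
      (hinj.ne hij))
  exact ⟨x, fun i => hx i (Finset.mem_univ i)⟩

-- The witness solves `x ≡ 1 (mod 2)` and `x ≡ (q - 2) r ≡ -2 r (mod q)` at the odd primes `q`.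
lemma exists_odd_nth_prime_dvd_add_two_mul {n : ℕ} (r : Fin n → ℕ) :
    ∃ x, Odd x ∧ ∀ i : Fin n, Nat.nth Nat.Prime (i + 1) ∣ x + 2 * r i := by
  obtain ⟨x, hx⟩ := exists_modEq_nth_prime
    (Fin.cons 1 fun i : Fin n => (Nat.nth Nat.Prime (i + 1) - 2) * r i)
  refine ⟨x, Nat.odd_iff.mpr ?_, fun i => (Nat.modEq_zero_iff_dvd).mp ?_⟩
  · simpa [Nat.ModEq, Nat.nth_prime_zero_eq_two] using hx 0
  · set q := Nat.nth Nat.Prime (i + 1)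
    have hq : 2 ≤ q := (Nat.prime_nth_prime _).two_le
    calc x + 2 * r i ≡ (q - 2) * r i + 2 * r i [MOD q] := by
          simpa using (hx i.succ).add_right (2 * r i)
      _ = q * r i := by rw [← add_mul, Nat.sub_add_cancel hq]
      _ ≡ 0 [MOD q] := (Nat.modEq_zero_iff_dvd).mpr (dvd_mul_right _ _)

section OddWitness

variable {k x : ℕ} {r : Fin (k - 1) → ℕ}

lemma one_lt_gcd_add_two_mul_primorial_iff (hx : Odd x)
    (hr : ∀ i : Fin (k - 1), Nat.nth Nat.Prime (i + 1) ∣ x + 2 * r i) (t : ℕ) :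
    1 < Nat.gcd (x + 2 * t) (primorial k) ↔
      ∃ i : Fin (k - 1), (t : ℤ) ≡ r i [ZMOD (Nat.nth Nat.Prime (i + 1) : ℤ)] := by
  have key (i : Fin (k - 1)) :
      Nat.nth Nat.Prime (i + 1) ∣ x + 2 * t ↔
        (t : ℤ) ≡ r i [ZMOD (Nat.nth Nat.Prime (i + 1) : ℤ)] := by
    rw [← Int.natCast_dvd_natCast]
    push_cast
    exact dvd_add_two_mul_iff_modEq (by exact_mod_cast odd_nth_prime_succ i)
      (by exact_mod_cast hr i)
  rw [one_lt_gcd_primorial_iff]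
  constructor
  · rintro ⟨_ | i, hi, hdvd⟩
    · rw [Nat.nth_prime_zero_eq_two] at hdvd
      exact absurd hdvd (by simpa [Nat.dvd_add_right] using hx.not_two_dvd_nat)
    · exact ⟨⟨i, by omega⟩, (key ⟨i, by omega⟩).mp hdvd⟩
  · rintro ⟨i, hi⟩
    exact ⟨i + 1, by omega, (key i).mpr hi⟩

lemma forall_one_lt_gcd_add_primorial_iff (hk : 1 ≤ k) (hx : Odd x) (n : ℕ) :
    (∀ j, 0 < j → j < 2 * (n + 1) → 1 < Nat.gcd (x + j) (primorial k)) ↔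
      ∀ t < n, 1 < Nat.gcd (x + 2 * (t + 1)) (primorial k) := by
  refine ⟨fun h t ht => h _ (by omega) (by omega), fun h j hj0 hjm => ?_⟩
  rcases Nat.even_or_odd j with ⟨t, rfl⟩ | hj
  · simpa [two_mul, Nat.sub_add_cancel (by omega : 1 ≤ t)] using h (t - 1) (by omega)
  · exact one_lt_gcd_primorial_iff.mpr
      ⟨0, hk, by rw [Nat.nth_prime_zero_eq_two]; exact (hx.add_odd hj).two_dvd⟩

lemma gcd_primorial_gap_iff_restrictedCovers (hk : 1 ≤ k) (hx : Odd x)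
    (hr : ∀ i : Fin (k - 1), Nat.nth Nat.Prime (i + 1) ∣ x + 2 * r i) (n : ℕ) :
    (Nat.gcd x (primorial k) = 1 ∧ Nat.gcd (x + 2 * (n + 1)) (primorial k) = 1 ∧
        ∀ j, 0 < j → j < 2 * (n + 1) → 1 < Nat.gcd (x + j) (primorial k)) ↔
      RestrictedCovers (fun i : Fin (k - 1) => Nat.nth Nat.Prime ((i : ℕ) + 1)) r 1 n := by
  have hcop (t : ℕ) : Nat.gcd (x + 2 * t) (primorial k) = 1 ↔
      ∀ i : Fin (k - 1), ¬ (t : ℤ) ≡ r i [ZMOD (Nat.nth Nat.Prime (i + 1) : ℤ)] := by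
    have := Nat.gcd_pos_of_pos_right (x + 2 * t) (primorial_pos k)
    rw [← not_exists, ← one_lt_gcd_add_two_mul_primorial_iff hx hr]
    omega
  refine (and_congr ?_ (and_congr ?_ ?_)).trans and_rotate.symm
  · simpa using hcop 0
  · simpa [add_comm] using hcop (n + 1)
  · simp only [forall_one_lt_gcd_add_primorial_iff hk hx,
      one_lt_gcd_add_two_mul_primorial_iff hx hr, Covers]
    push_cast
    simp only [add_comm]

end OddWitness

theorem memD_iff_restricted_covering_odd_primes (k m : ℕ) (hk : 2 ≤ k) (hm : 1 ≤ m)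
    (heven : Even m) :
    memD k m ↔
      ∃ r : Fin (k - 1) → ℕ,
        (∀ i : Fin (k - 1), 1 ≤ r i ∧ r i < Nat.nth Nat.Prime ((i : ℕ) + 1)) ∧
        RestrictedCovers (fun i : Fin (k - 1) => Nat.nth Nat.Prime ((i : ℕ) + 1)) r 1
          (m / 2 - 1) := by
  obtain ⟨n, rfl⟩ : ∃ n, m = 2 * (n + 1) := ⟨m / 2 - 1, by grind⟩
  rw [show 2 * (n + 1) / 2 - 1 = n by omega]
  constructor
  · rintro ⟨x, -, hgap⟩
    have hx : Odd x := Nat.odd_iff.mpr (Nat.two_dvd_ne_zero.mp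
      (by simpa [Nat.nth_prime_zero_eq_two] using gcd_primorial_eq_one_iff.mp hgap.1 0 (by omega)))
    choose r hrlt hr using fun i : Fin (k - 1) =>
      exists_lt_dvd_add_two_mul (odd_nth_prime_succ i) x
    have hcov := (gcd_primorial_gap_iff_restrictedCovers (by omega) hx hr n).mp hgap
    exact ⟨r, fun i => ⟨Nat.pos_of_ne_zero fun h0 => hcov.2.1 i (by simp [h0]), hrlt i⟩, hcov⟩
  · rintro ⟨r, -, hcov⟩
    obtain ⟨x, hx, hr⟩ := exists_odd_nth_prime_dvd_add_two_mul r
    exact ⟨x, hx.pos, (gcd_primorial_gap_iff_restrictedCovers (by omega) hx hr n).mpr hcov⟩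

end PrimorialDifferences
end

section
/- The number 20 does not occur as a difference between consecutive positive integers coprime to the 6-th primorial 30030 = 2·3·5·7·11·13; that is, 20 ∉ D(6). (This disproves de Polignac's conjecture that every even number up to 2·p_{k−1} = 22 occurs as such a difference.) -/
/-!
If `x` and `x + 20` are coprime to `30030` and every number strictly between is not, then `x` is
odd and `x ≡ 2 (mod 3)`, so each of the six numbers `x + j`, `j ∈ {2, 6, 8, 12, 14, 18}`, is
prime to `6` and needs a prime factor among `5, 7, 11, 13`. A prime `p` divides `x + j` only for
`j` in the single class `-x` mod `p`; modulo `5` every class contains at most two of these `j`,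
modulo `7`, `11`, `13` at most one. So at most `2 + 1 + 1 + 1 = 5` of the six are covered.
-/

namespace PrimorialDifferences

open Finset Nat

lemma nth_prime_five_eq_thirteen : nth Nat.Prime 5 = 13 :=
  nth_count (by norm_num : Nat.Prime 13)

noncomputable def firstPrimes (k : ℕ) : Finset ℕ := (range k).image (nth Nat.Prime)

lemma prime_of_mem_firstPrimes {k p : ℕ} (hp : p ∈ firstPrimes k) : p.Prime := by
  obtain ⟨i, -, rfl⟩ := Finset.mem_image.1 hp
  exact prime_nth_prime i

lemma primorial_eq_prod_firstPrimes (k : ℕ) : primorial k = ∏ p ∈ firstPrimes k, p := by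
  rw [firstPrimes, prod_image fun _ _ _ _ h => nth_injective infinite_setOfPred_prime h]; rfl

lemma firstPrimes_six : firstPrimes 6 = {2, 3, 5, 7, 11, 13} := by
  simp only [firstPrimes, range_add_one, range_zero, image_insert, image_empty,
    nth_prime_zero_eq_two, nth_prime_one_eq_three, nth_prime_two_eq_five,
    nth_prime_three_eq_seven, nth_prime_four_eq_eleven, nth_prime_five_eq_thirteen]
  decide

lemma primorial_six : primorial 6 = 30030 := by
  rw [primorial_eq_prod_firstPrimes, firstPrimes_six]
  rfl

lemma coprime_primorial_iff {k x : ℕ} :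
    Coprime x (primorial k) ↔ ∀ p ∈ firstPrimes k, ¬ p ∣ x := by
  rw [primorial_eq_prod_firstPrimes, coprime_prod_right_iff]
  refine forall₂_congr fun p hp => ?_
  rw [coprime_comm, (prime_of_mem_firstPrimes hp).coprime_iff_not_dvd]

lemma one_lt_gcd_primorial_iff_s17 {k x : ℕ} :
    1 < x.gcd (primorial k) ↔ ∃ p ∈ firstPrimes k, p ∣ x := by
  have hpos : 0 < x.gcd (primorial k) :=
    gcd_pos_of_pos_right x (prod_pos fun i _ => (prime_nth_prime i).pos)
  calc 1 < x.gcd (primorial k) ↔ ¬ Coprime x (primorial k) := by rw [Coprime]; omega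
    _ ↔ ∃ p ∈ firstPrimes k, p ∣ x := by
      simp only [coprime_primorial_iff, not_forall, not_not, exists_prop]

def maxResidueCount (S : Finset ℕ) (p : ℕ) : ℕ :=
  (range p).sup fun r => #{j ∈ S | j % p = r}

lemma card_filter_dvd_add_le_maxResidueCount (S : Finset ℕ) {p : ℕ} (hp : 0 < p) (x : ℕ) :
    #{j ∈ S | p ∣ x + j} ≤ maxResidueCount S p := by
  obtain h | ⟨j₀, hj₀⟩ := {j ∈ S | p ∣ x + j}.eq_empty_or_nonempty
  · simp [h]
  have hsub : {j ∈ S | p ∣ x + j} ⊆ {j ∈ S | j % p = j₀ % p} := by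
    intro j hj
    simp only [mem_filter] at hj hj₀ ⊢
    refine ⟨hj.1, Nat.ModEq.add_left_cancel' x ?_⟩
    exact (modEq_zero_iff_dvd.2 hj.2).trans (modEq_zero_iff_dvd.2 hj₀.2).symm
  exact (card_le_card hsub).trans <|
    le_sup (f := fun r => #{j ∈ S | j % p = r}) (mem_range.2 (mod_lt j₀ hp))

lemma card_le_sum_maxResidueCount {S P : Finset ℕ} {x : ℕ} (hP : ∀ p ∈ P, 0 < p)
    (hcover : ∀ j ∈ S, ∃ p ∈ P, p ∣ x + j) : #S ≤ ∑ p ∈ P, maxResidueCount S p := by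
  have hsub : S ⊆ P.biUnion fun p => {j ∈ S | p ∣ x + j} := by
    intro j hj
    obtain ⟨p, hp, hdvd⟩ := hcover j hj
    exact mem_biUnion.2 ⟨p, hp, mem_filter.2 ⟨hj, hdvd⟩⟩
  calc #S ≤ ∑ p ∈ P, #{j ∈ S | p ∣ x + j} := (card_le_card hsub).trans card_biUnion_le
    _ ≤ ∑ p ∈ P, maxResidueCount S p :=
      sum_le_sum fun p hp => card_filter_dvd_add_le_maxResidueCount S (hP p hp) x

theorem twenty_not_mem_D_six : primorial 6 = 30030 ∧ ¬ memD 6 20 := by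
  refine ⟨primorial_six, ?_⟩
  rintro ⟨x, -, hx, hx20, hgap⟩
  simp only [← coprime_iff_gcd_eq_one, coprime_primorial_iff, firstPrimes_six, mem_insert,
    mem_singleton, forall_eq_or_imp, forall_eq] at hx hx20
  -- `x` is odd and `x ≡ 2 [MOD 3]`, so neither 2 nor 3 divides any of these `x + j`.
  have hcover : ∀ j ∈ ({2, 6, 8, 12, 14, 18} : Finset ℕ),
      ∃ p ∈ ({5, 7, 11, 13} : Finset ℕ), p ∣ x + j := by
    intro j hj
    simp only [mem_insert, mem_singleton] at hj
    obtain ⟨p, hp, hpj⟩ := one_lt_gcd_primorial_iff_s17.1 (hgap j (by omega) (by omega))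
    simp only [firstPrimes_six, mem_insert, mem_singleton] at hp
    rcases hp with rfl | rfl | hp
    · omega
    · omega
    · exact ⟨p, by simpa only [mem_insert, mem_singleton] using hp, hpj⟩
  -- The residue-class counts modulo 5, 7, 11, 13 are 2, 1, 1, 1: they cover only 5 of the 6.
  exact absurd (card_le_sum_maxResidueCount (by decide) hcover) (by decide)

end PrimorialDifferences
end
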